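/- Let N be a squarefree positive integer, let a be a positive divisor of N, and let s ∈ ℂ be such that for every prime p dividing N one has p^{2(1−s)} ≠ 1 and p^{1−s} ≠ −1. For positive divisors a, b of N and w ∈ ℂ define ϱ_p(a, b; w) := (p−1)/(p^{2w} − 1) if (p ∣ a ↔ p ∣ b), and ϱ_p(a, b; w) := p^{w}·(1 − p^{1−2w})/(p^{2w} − 1) otherwise. Then Σ_{b ∣ N} ∏_{p ∣ N} ϱ_p(a, b; 1−s) = ∏_{p ∣ N} (p^{s} + 1)/(p^{1−s} + 1), where the sum runs over the positive divisors b of N and the products over primes p dividing N. -/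

import Mathlib

open Complex

/-- The local factor `ϱ_p(a, b; w)` of the scattering matrix entry attached to the
cusps `1/a` and `1/b` of `Γ₀(N)`. -/
noncomputable def rhoP (p a b : ℕ) (w : ℂ) : ℂ :=
  if p ∣ a ↔ p ∣ b then ((p : ℂ) - 1) / ((p : ℂ) ^ (2 * w) - 1)
  else (p : ℂ) ^ w * (1 - (p : ℂ) ^ (1 - 2 * w)) / ((p : ℂ) ^ (2 * w) - 1)

/-! For squarefree `N`, `b ↦ b.primeFactors` identifies the divisors of `N` with the subsets of
its prime factors, so a sum over `b ∣ N` of a product of local factors depending only on whether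
`p ∣ b` is the expansion of a product of two-term sums.
Locally, the two values of `ϱ_p(a, ·; 1 - s)` add up to `(p^s + 1)/(p^{1-s} + 1)`: with
`x = p^{1-s}`, `y = p^s` and `xy = p`, this is `(xy - 1 + x - y) / (x² - 1) = (y + 1)/(x + 1)`. -/

namespace Nat

theorem sum_powerset_primeFactors_eq_sum_divisors {M : Type*} [AddCommMonoid M] {N : ℕ}
    (hN : Squarefree N) (G : Finset ℕ → M) :
    ∑ t ∈ N.primeFactors.powerset, G t = ∑ b ∈ N.divisors, G b.primeFactors := by
  have hsq {b : ℕ} (hb : b ∈ N.divisors) : Squarefree b :=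
    hN.squarefree_of_dvd (dvd_of_mem_divisors hb)
  refine Finset.sum_nbij' (fun t ↦ ∏ p ∈ t, p) primeFactors ?_ ?_ ?_ ?_ ?_
  · intro t ht
    refine mem_divisors.mpr ⟨?_, hN.ne_zero⟩
    calc ∏ p ∈ t, p ∣ ∏ p ∈ N.primeFactors, p :=
          Finset.prod_dvd_prod_of_subset _ _ _ (Finset.mem_powerset.mp ht)
      _ = N := prod_primeFactors_of_squarefree hN
  · intro b hb
    exact Finset.mem_powerset.mpr (primeFactors_mono (dvd_of_mem_divisors hb) hN.ne_zero)
  · intro t ht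
    exact primeFactors_prod fun p hp ↦ prime_of_mem_primeFactors (Finset.mem_powerset.mp ht hp)
  · intro b hb
    exact prod_primeFactors_of_squarefree (hsq hb)
  · intro t ht
    rw [primeFactors_prod fun p hp ↦ prime_of_mem_primeFactors (Finset.mem_powerset.mp ht hp)]

theorem _root_.Squarefree.sum_divisors_prod_ite_dvd {R : Type*} [CommSemiring R] {N : ℕ}
    (hN : Squarefree N) (f g : ℕ → R) :
    ∑ b ∈ N.divisors, ∏ p ∈ N.primeFactors, (if p ∣ b then f p else g p)
      = ∏ p ∈ N.primeFactors, (f p + g p) := by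
  classical
  rw [Finset.prod_add, sum_powerset_primeFactors_eq_sum_divisors hN]
  refine Finset.sum_congr rfl fun b hb ↦ ?_
  have hb0 : b ≠ 0 := (pos_of_mem_divisors hb).ne'
  have hsub : b.primeFactors ⊆ N.primeFactors :=
    primeFactors_mono (dvd_of_mem_divisors hb) hN.ne_zero
  have hsplit := Finset.prod_piecewise N.primeFactors b.primeFactors f g
  rw [Finset.inter_eq_right.mpr hsub] at hsplit
  rw [← hsplit]
  refine Finset.prod_congr rfl fun p hp ↦ ?_
  simp only [Finset.piecewise, mem_primeFactors_of_ne_zero hb0, prime_of_mem_primeFactors hp,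
    true_and]

end Nat

theorem rhoP_eq_ite {p : ℕ} (hp : p ≠ 1) (a b : ℕ) (w : ℂ) :
    rhoP p a b w = if p ∣ b then rhoP p a p w else rhoP p a 1 w := by
  by_cases hb : p ∣ b <;> simp [rhoP, hb, hp]

theorem rhoP_self_add_rhoP_one {p : ℕ} (hp : p.Prime) (a : ℕ) {w : ℂ}
    (h1 : (p : ℂ) ^ (2 * w) ≠ 1) (h2 : (p : ℂ) ^ w ≠ -1) :
    rhoP p a p w + rhoP p a 1 w = ((p : ℂ) ^ (1 - w) + 1) / ((p : ℂ) ^ w + 1) := by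
  have hp0 : (p : ℂ) ≠ 0 := by exact_mod_cast hp.ne_zero
  set x := (p : ℂ) ^ w
  set y := (p : ℂ) ^ (1 - w)
  have hxy : x * y = p := by rw [← cpow_add _ _ hp0, add_sub_cancel, cpow_one]
  have hx2 : (p : ℂ) ^ (2 * w) = x * x := by rw [two_mul, cpow_add _ _ hp0]
  have hyx : (p : ℂ) ^ (1 - 2 * w) = y * x⁻¹ := by
    rw [show 1 - 2 * w = (1 - w) + -w by ring, cpow_add _ _ hp0, cpow_neg]
  have hx0 : x ≠ 0 := left_ne_zero_of_mul (hxy ▸ hp0)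
  have hxx : x * x - 1 ≠ 0 := sub_ne_zero.mpr (hx2 ▸ h1)
  have hx1 : x + 1 ≠ 0 := fun h ↦ h2 (eq_neg_of_add_eq_zero_left h)
  have key : ((p : ℂ) - 1) / ((p : ℂ) ^ (2 * w) - 1)
      + x * (1 - (p : ℂ) ^ (1 - 2 * w)) / ((p : ℂ) ^ (2 * w) - 1) = (y + 1) / (x + 1) := by
    rw [hx2, hyx, ← hxy, ← add_div, div_eq_div_iff hxx hx1]
    field_simp
    ring
  by_cases ha : p ∣ a
  · simpa [rhoP, ha, hp.ne_one] using key
  · simpa [rhoP, ha, hp.ne_one, add_comm] using key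

theorem stmt15_general (N : ℕ) (hNsq : Squarefree N)
    (a : ℕ) (s : ℂ)
    (hs : ∀ p ∈ N.primeFactors,
      (p : ℂ) ^ (2 * (1 - s)) ≠ 1 ∧ (p : ℂ) ^ (1 - s) ≠ -1) :
    (∑ b ∈ N.divisors, ∏ p ∈ N.primeFactors, rhoP p a b (1 - s))
      = ∏ p ∈ N.primeFactors, ((p : ℂ) ^ s + 1) / ((p : ℂ) ^ (1 - s) + 1) := by
  calc (∑ b ∈ N.divisors, ∏ p ∈ N.primeFactors, rhoP p a b (1 - s))
      = ∑ b ∈ N.divisors, ∏ p ∈ N.primeFactors,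
          (if p ∣ b then rhoP p a p (1 - s) else rhoP p a 1 (1 - s)) :=
        Finset.sum_congr rfl fun b _ ↦ Finset.prod_congr rfl fun p hp ↦
          rhoP_eq_ite (Nat.prime_of_mem_primeFactors hp).ne_one a b _
    _ = ∏ p ∈ N.primeFactors, (rhoP p a p (1 - s) + rhoP p a 1 (1 - s)) :=
        hNsq.sum_divisors_prod_ite_dvd _ _
    _ = ∏ p ∈ N.primeFactors, ((p : ℂ) ^ s + 1) / ((p : ℂ) ^ (1 - s) + 1) :=
        Finset.prod_congr rfl fun p hp ↦ by
          rw [rhoP_self_add_rhoP_one (Nat.prime_of_mem_primeFactors hp) a (hs p hp).1 (hs p hp).2,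
            sub_sub_cancel]

/-- Row sums of the scattering matrix: for squarefree `N`, `a ∣ N`,
`Σ_{b ∣ N} ∏_{p ∣ N} ϱ_p(a, b; 1−s) = ∏_{p ∣ N} (p^s + 1)/(p^{1−s} + 1)`. -/
theorem stmt15 (N : ℕ) (hN : 0 < N) (hNsq : Squarefree N)
    (a : ℕ) (ha0 : 0 < a) (ha : a ∣ N) (s : ℂ)
    (hs : ∀ p ∈ N.primeFactors,
      (p : ℂ) ^ (2 * (1 - s)) ≠ 1 ∧ (p : ℂ) ^ (1 - s) ≠ -1) :
    (∑ b ∈ N.divisors, ∏ p ∈ N.primeFactors, rhoP p a b (1 - s))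
      = ∏ p ∈ N.primeFactors, ((p : ℂ) ^ s + 1) / ((p : ℂ) ^ (1 - s) + 1) :=
  stmt15_general N hNsq a s hs
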